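/- arXiv:2509.20921 — 4 statements merged into one kernel-verified Lean document; each statement's English description precedes it below -/
import Mathlib

section
/- For points x = (x₁,x₂) and y = (y₁,y₂) in ℝ²_≤, let T_x = {(a,b) ∈ ℝ² : x₁ ≤ a ≤ b ≤ x₂} and T_y = {(a,b) ∈ ℝ² : y₁ ≤ a ≤ b ≤ y₂}. Then the 2-dimensional Lebesgue measure of the symmetric difference T_x ∆ T_y equals ½(x₂−x₁)² + ½(y₂−y₁)² − (max(min(x₂,y₂) − max(x₁,y₁), 0))², i.e. it equals d_rk(x,y). -/
/-!
Two triangles `T_x`, `T_y` intersect in the triangle `T_z` with `z = (max x₁ y₁, min x₂ y₂)`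
(empty when `z₁ > z₂`), and a triangle `T_z` has area `½ max(z₂ − z₁, 0)²` by Fubini.
Inclusion–exclusion `|A ∆ B| = |A| + |B| − 2|A ∩ B|` then gives `d_rk`.
-/

open MeasureTheory

/-- The triangle region `T_x = {(a,b) : x₁ ≤ a ≤ b ≤ x₂}` associated to a point
`x = (x₁,x₂)` of `ℝ²_≤`. -/
def triRegion (x : ℝ × ℝ) : Set (ℝ × ℝ) :=
  {p | x.1 ≤ p.1 ∧ p.1 ≤ p.2 ∧ p.2 ≤ x.2}

/-- The rank metric `d_rk` on `ℝ²_≤`. -/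
noncomputable def drk (x y : ℝ × ℝ) : ℝ :=
  (x.2 - x.1) ^ 2 / 2 + (y.2 - y.1) ^ 2 / 2 - (max (min x.2 y.2 - max x.1 y.1) 0) ^ 2

open Set
open scoped ENNReal

theorem measureReal_symmDiff_eq_add_sub_inter {α : Type*} [MeasurableSpace α] {μ : Measure α}
    {s t : Set α} (hs : MeasurableSet s) (ht : MeasurableSet t) (hμs : μ s ≠ ∞) (hμt : μ t ≠ ∞) :
    μ.real (symmDiff s t) = μ.real s + μ.real t - 2 * μ.real (s ∩ t) := by
  have hs' := measureReal_sdiff_add_inter ht hμs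
  have ht' := measureReal_sdiff_add_inter hs hμt
  rw [inter_comm] at ht'
  rw [measureReal_symmDiff_eq hs ht hμs hμt]
  linarith

theorem measurableSet_triRegion (z : ℝ × ℝ) : MeasurableSet (triRegion z) :=
  (measurableSet_le measurable_const measurable_fst).inter
    ((measurableSet_le measurable_fst measurable_snd).inter
      (measurableSet_le measurable_snd measurable_const))

theorem triRegion_inter (x y : ℝ × ℝ) :
    triRegion x ∩ triRegion y = triRegion (max x.1 y.1, min x.2 y.2) := by
  ext p
  simp only [triRegion, mem_inter_iff, mem_ofPred_eq, max_le_iff, le_min_iff]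
  tauto

theorem volume_preimage_mk_triRegion (z : ℝ × ℝ) (a : ℝ) :
    volume (Prod.mk a ⁻¹' triRegion z) =
      (Icc z.1 z.2).indicator (fun a ↦ ENNReal.ofReal (z.2 - a)) a := by
  by_cases ha : z.1 ≤ a
  · have : Prod.mk a ⁻¹' triRegion z = Icc a z.2 := by ext b; simp [triRegion, ha]
    rw [this, Real.volume_Icc]
    by_cases ha' : a ≤ z.2
    · simp [ha, ha']
    · simp [ha', (not_le.1 ha').le]
  · have : Prod.mk a ⁻¹' triRegion z = ∅ := by ext b; simp [triRegion, ha]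
    simp [this, ha]

theorem volume_triRegion_of_le (z : ℝ × ℝ) (hz : z.1 ≤ z.2) :
    volume (triRegion z) = ENNReal.ofReal ((z.2 - z.1) ^ 2 / 2) := by
  rw [Measure.volume_eq_prod, Measure.prod_apply (measurableSet_triRegion z)]
  simp_rw [volume_preimage_mk_triRegion]
  rw [lintegral_indicator measurableSet_Icc, ← ofReal_integral_eq_lintegral_ofReal,
    integral_Icc_eq_integral_Ioc,
    ← intervalIntegral.integral_of_le hz]
  · rw [intervalIntegral.integral_comp_sub_left (fun x ↦ x), integral_id]
    ring_nf
  · exact (continuous_const.sub continuous_id).integrableOn_Icc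
  · filter_upwards [ae_restrict_mem measurableSet_Icc] with a ha
    exact sub_nonneg.2 ha.2

theorem triRegion_eq_empty (z : ℝ × ℝ) (hz : z.2 < z.1) : triRegion z = ∅ := by
  ext p; simp only [triRegion, mem_ofPred_eq, mem_empty_iff_false, iff_false]
  rintro ⟨h1, h2, h3⟩; linarith

theorem volume_triRegion (z : ℝ × ℝ) :
    volume (triRegion z) = ENNReal.ofReal (max (z.2 - z.1) 0 ^ 2 / 2) := by
  rcases le_or_gt z.1 z.2 with hz | hz
  · rw [volume_triRegion_of_le z hz, max_eq_left (sub_nonneg.2 hz)]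
  · simp [triRegion_eq_empty z hz, max_eq_right (sub_nonpos.2 hz.le)]

theorem measureReal_triRegion (z : ℝ × ℝ) :
    volume.real (triRegion z) = max (z.2 - z.1) 0 ^ 2 / 2 := by
  rw [measureReal_def, volume_triRegion, ENNReal.toReal_ofReal (by positivity)]

/-- The 2-dimensional Lebesgue measure of the symmetric difference `T_x ∆ T_y`
equals `d_rk(x,y) = ½(x₂−x₁)² + ½(y₂−y₁)² − (max(min(x₂,y₂) − max(x₁,y₁), 0))²`. -/
theorem stmt0 (x y : ℝ × ℝ) (hx : x.1 ≤ x.2) (hy : y.1 ≤ y.2) :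
    volume (symmDiff (triRegion x) (triRegion y)) = ENNReal.ofReal (drk x y) := by
  have hfin (z : ℝ × ℝ) : volume (triRegion z) ≠ ∞ := by simp [volume_triRegion]
  rw [← ofReal_measureReal (measure_symmDiff_ne_top (hfin x) (hfin y)),
    measureReal_symmDiff_eq_add_sub_inter (measurableSet_triRegion x) (measurableSet_triRegion y)
      (hfin x) (hfin y), triRegion_inter, measureReal_triRegion, measureReal_triRegion,
    measureReal_triRegion, drk, max_eq_left (sub_nonneg.2 hx), max_eq_left (sub_nonneg.2 hy)]
  ring_nf
end

section
/- Let x = (x₁,x₂) ∈ ℝ²_≤ with l = x₂ − x₁ > 0, and let 0 < r < min(l, ½l²). If 0 < r'' ≤ √(l² + 2r) − l, then every y ∈ ℝ²_≤ with d_dim(x,y) ≤ r'' satisfies d_rk(x,y) ≤ r; that is, the closed d_dim-ball of radius r'' centered at x is contained in the closed d_rk-ball of radius r centered at x. -/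
/-- The dimension "distance" formula on `ℝ²_≤`. -/
noncomputable def ddim (x y : ℝ × ℝ) : ℝ :=
  (x.2 - x.1) + (y.2 - y.1) - 2 * max (min x.2 y.2 - max x.1 y.1) 0

noncomputable def overlap (x y : ℝ × ℝ) : ℝ :=
  max (min x.2 y.2 - max x.1 y.1) 0

lemma drk_eq (x y : ℝ × ℝ) :
    drk x y = (x.2 - x.1) ^ 2 / 2 + (y.2 - y.1) ^ 2 / 2 - overlap x y ^ 2 := rfl

lemma ddim_eq (x y : ℝ × ℝ) :
    ddim x y = (x.2 - x.1) + (y.2 - y.1) - 2 * overlap x y := rfl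

lemma overlap_nonneg (x y : ℝ × ℝ) : 0 ≤ overlap x y :=
  le_max_right _ _

lemma overlap_comm (x y : ℝ × ℝ) : overlap x y = overlap y x := by
  rw [overlap, overlap, min_comm, max_comm x.1]

lemma overlap_le_left {x : ℝ × ℝ} (hx : x.1 ≤ x.2) (y : ℝ × ℝ) : overlap x y ≤ x.2 - x.1 :=
  max_le (sub_le_sub (min_le_left _ _) (le_max_left _ _)) (sub_nonneg.2 hx)

lemma overlap_le_right (x : ℝ × ℝ) {y : ℝ × ℝ} (hy : y.1 ≤ y.2) : overlap x y ≤ y.2 - y.1 :=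
  overlap_comm x y ▸ overlap_le_left hy x

lemma ddim_nonneg {x y : ℝ × ℝ} (hx : x.1 ≤ x.2) (hy : y.1 ≤ y.2) : 0 ≤ ddim x y := by
  rw [ddim_eq]
  linarith [overlap_le_left hx y, overlap_le_right x hy]

lemma drk_le_mul_ddim_add_sq {x y : ℝ × ℝ} (hx : x.1 ≤ x.2) (hy : y.1 ≤ y.2) :
    drk x y ≤ (x.2 - x.1) * ddim x y + ddim x y ^ 2 / 2 := by
  have hs := sub_nonneg.2 (overlap_le_left hx y)
  have ht := sub_nonneg.2 (overlap_le_right x hy)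
  rw [drk_eq, ddim_eq]
  nlinarith [mul_nonneg hs hs, mul_nonneg hs ht]

lemma mul_add_sq_div_two_le_of_le_sqrt_sub {l d r : ℝ} (hl : 0 ≤ l) (hd : 0 ≤ d)
    (hr : 0 ≤ l ^ 2 + 2 * r) (hdr : d ≤ Real.sqrt (l ^ 2 + 2 * r) - l) :
    l * d + d ^ 2 / 2 ≤ r := by
  have hsq : (l + d) ^ 2 ≤ l ^ 2 + 2 * r := by
    calc (l + d) ^ 2 ≤ Real.sqrt (l ^ 2 + 2 * r) ^ 2 := by gcongr; linarith
      _ = l ^ 2 + 2 * r := Real.sq_sqrt hr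
  linarith

theorem stmt4_general (x : ℝ × ℝ) (hx : x.1 ≤ x.2) (l r r'' : ℝ) (hl : l = x.2 - x.1)
    (hlpos : 0 < l) (hr0 : 0 < r)
    (hr'' : r'' ≤ Real.sqrt (l ^ 2 + 2 * r) - l) :
    ∀ y : ℝ × ℝ, y.1 ≤ y.2 → ddim x y ≤ r'' → drk x y ≤ r := by
  intro y hy hdd
  calc drk x y ≤ l * ddim x y + ddim x y ^ 2 / 2 := hl ▸ drk_le_mul_ddim_add_sq hx hy
    _ ≤ r := mul_add_sq_div_two_le_of_le_sqrt_sub hlpos.le (ddim_nonneg hx hy)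
        (by positivity) (hdd.trans hr'')

/-- If `0 < r < min(l, ½l²)` and `0 < r'' ≤ √(l² + 2r) − l`, then the closed
`d_dim`-ball of radius `r''` about `x` is contained in the closed `d_rk`-ball of
radius `r` about `x`. -/
theorem stmt4 (x : ℝ × ℝ) (hx : x.1 ≤ x.2) (l r r'' : ℝ) (hl : l = x.2 - x.1)
    (hlpos : 0 < l) (hr0 : 0 < r) (hr : r < min l (l ^ 2 / 2)) (hr''0 : 0 < r'')
    (hr'' : r'' ≤ Real.sqrt (l ^ 2 + 2 * r) - l) :
    ∀ y : ℝ × ℝ, y.1 ≤ y.2 → ddim x y ≤ r'' → drk x y ≤ r :=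
  stmt4_general x hx l r r'' hl hlpos hr0 hr''
end

section
/- Let x = (x₁,x₂) ∈ ℝ²_≤ with l = x₂ − x₁ > 0, and let 0 < r < min(l, ½l²). If r' ≥ l − √(l² − 2r), then every y ∈ ℝ²_≤ with d_rk(x,y) ≤ r satisfies d_dim(x,y) ≤ r'; that is, the closed d_rk-ball of radius r centered at x is contained in the closed d_dim-ball of radius r' centered at x. -/
lemma add_sub_two_mul_le_sub_sqrt {a b m r : ℝ} (hm : 0 ≤ m) (hr : 2 * r < a ^ 2)
    (h : a ^ 2 / 2 + b ^ 2 / 2 - m ^ 2 ≤ r) :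
    a + b - 2 * m ≤ a - √(a ^ 2 - 2 * r) := by
  have hb : b ≤ 2 * m := by nlinarith
  have hsq : a ^ 2 - 2 * r ≤ (a - (a + b - 2 * m)) ^ 2 := by nlinarith [sq_nonneg (b - m)]
  have hsqrt : √(a ^ 2 - 2 * r) ≤ a - (a + b - 2 * m) :=
    Real.sqrt_le_iff.mpr ⟨by linarith, hsq⟩
  linarith

theorem stmt5_general (x : ℝ × ℝ) (l r r' : ℝ) (hl : l = x.2 - x.1)
    (hr : r < min l (l ^ 2 / 2))
    (hr' : l - Real.sqrt (l ^ 2 - 2 * r) ≤ r') :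
    ∀ y : ℝ × ℝ, y.1 ≤ y.2 → drk x y ≤ r → ddim x y ≤ r' := by
  intro y _ hdrk
  subst hl
  have hr2 : 2 * r < (x.2 - x.1) ^ 2 := by linarith [(lt_min_iff.mp hr).2]
  exact (add_sub_two_mul_le_sub_sqrt (le_max_right _ _) hr2 hdrk).trans hr'

/-- If `0 < r < min(l, ½l²)` and `r' ≥ l − √(l² − 2r)`, then the closed
`d_rk`-ball of radius `r` about `x` is contained in the closed `d_dim`-ball of
radius `r'` about `x`. -/
theorem stmt5 (x : ℝ × ℝ) (hx : x.1 ≤ x.2) (l r r' : ℝ) (hl : l = x.2 - x.1)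
    (hlpos : 0 < l) (hr0 : 0 < r) (hr : r < min l (l ^ 2 / 2))
    (hr' : l - Real.sqrt (l ^ 2 - 2 * r) ≤ r') :
    ∀ y : ℝ × ℝ, y.1 ≤ y.2 → drk x y ≤ r → ddim x y ≤ r' :=
  stmt5_general x l r r' hl hr hr'
end

section
/- For all x = (x₁,x₂) and y = (y₁,y₂) in ℝ²_≤, the integral ∫_ℝ |tent_x(t) − tent_y(t)| dt equals ½ d_rk(x,y), i.e. ∫_ℝ |max(0, min(t−x₁, x₂−t)) − max(0, min(t−y₁, y₂−t))| dt = ¼(x₂−x₁)² + ¼(y₂−y₁)² − ½ (max(min(x₂,y₂) − max(x₁,y₁), 0))². -/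
open MeasureTheory

/-- The tent function of a point `x = (x₁,x₂) ∈ ℝ²_≤`:
`tent_x(t) = max(0, min(t−x₁, x₂−t))`. -/
noncomputable def tent (x : ℝ × ℝ) (t : ℝ) : ℝ := max 0 (min (t - x.1) (x.2 - t))

/-!
Since `|a - b| = a + b - 2 min(a, b)`, the `L¹` distance of two tents is the sum of their areas
minus twice the area of their pointwise minimum. The minimum of the tents over `[x₁, x₂]` and
`[y₁, y₂]` is the tent over the intersection `[max x₁ y₁, min x₂ y₂]`, and the tent over `[a, b]`
has area `max(b - a, 0)² / 4`.
-/

theorem abs_sub_eq_add_sub_two_nsmul_min {α : Type*} [AddCommGroup α] [LinearOrder α]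
    [IsOrderedAddMonoid α] (a b : α) : |a - b| = a + b - 2 • min a b := by
  rw [← max_sub_min_eq_abs', ← min_add_max a b, two_nsmul]
  abel

theorem integral_abs_sub_eq {α : Type*} [MeasurableSpace α] {μ : Measure α} {f g : α → ℝ}
    (hf : Integrable f μ) (hg : Integrable g μ) :
    ∫ a, |f a - g a| ∂μ = ∫ a, f a ∂μ + ∫ a, g a ∂μ - 2 * ∫ a, min (f a) (g a) ∂μ := by
  have hmin : Integrable (fun a ↦ min (f a) (g a)) μ := hf.inf hg
  have hsum : Integrable (fun a ↦ f a + g a) μ := hf.add hg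
  simp_rw [abs_sub_eq_add_sub_two_nsmul_min, nsmul_eq_mul, Nat.cast_ofNat]
  rw [integral_sub hsum (hmin.const_mul 2), integral_add hf hg, integral_const_mul]

theorem continuous_tent (x : ℝ × ℝ) : Continuous (tent x) := by
  unfold tent; fun_prop

theorem tent_eq_zero_of_notMem_Icc {x : ℝ × ℝ} {t : ℝ} (ht : t ∉ Set.Icc x.1 x.2) :
    tent x t = 0 := by
  rw [Set.mem_Icc, not_and_or, not_le, not_le] at ht
  refine max_eq_left ?_
  rcases ht with h | h
  · exact min_le_of_left_le (by linarith)
  · exact min_le_of_right_le (by linarith)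

theorem integrable_tent (x : ℝ × ℝ) : Integrable (tent x) :=
  (continuous_tent x).integrable_of_hasCompactSupport
    (HasCompactSupport.intro isCompact_Icc fun _ ↦ tent_eq_zero_of_notMem_Icc)

theorem min_tent_tent (x y : ℝ × ℝ) (t : ℝ) :
    min (tent x t) (tent y t) = tent (max x.1 y.1, min x.2 y.2) t := by
  unfold tent
  rw [← max_min_distrib_left, min_min_min_comm, min_sub_sub_left, min_sub_sub_right]

theorem tent_of_le_of_le_midpoint {x : ℝ × ℝ} {t : ℝ} (h₁ : x.1 ≤ t) (h₂ : t ≤ (x.1 + x.2) / 2) :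
    tent x t = t - x.1 := by
  unfold tent
  rw [min_eq_left (by linarith), max_eq_right (by linarith)]

theorem tent_of_midpoint_le_of_le {x : ℝ × ℝ} {t : ℝ} (h₁ : (x.1 + x.2) / 2 ≤ t) (h₂ : t ≤ x.2) :
    tent x t = x.2 - t := by
  unfold tent
  rw [min_eq_right (by linarith), max_eq_right (by linarith)]

theorem integral_tent_of_le {x : ℝ × ℝ} (hx : x.1 ≤ x.2) :
    ∫ t, tent x t = (x.2 - x.1) ^ 2 / 4 := by
  set m := (x.1 + x.2) / 2 with hm
  have hm₁ : x.1 ≤ m := by linarith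
  have hm₂ : m ≤ x.2 := by linarith
  have hint : ∀ a b, IntervalIntegrable (tent x) volume a b :=
    fun _ _ ↦ (continuous_tent x).intervalIntegrable _ _
  have rising : ∫ t in x.1..m, tent x t = ∫ t in x.1..m, (t - x.1) :=
    intervalIntegral.integral_congr fun t ht ↦ by
      rw [Set.uIcc_of_le hm₁] at ht
      exact tent_of_le_of_le_midpoint ht.1 ht.2
  have falling : ∫ t in m..x.2, tent x t = ∫ t in m..x.2, (x.2 - t) :=
    intervalIntegral.integral_congr fun t ht ↦ by
      rw [Set.uIcc_of_le hm₂] at ht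
      exact tent_of_midpoint_le_of_le ht.1 ht.2
  rw [← setIntegral_eq_integral_of_forall_compl_eq_zero fun _ ↦ tent_eq_zero_of_notMem_Icc,
    integral_Icc_eq_integral_Ioc, ← intervalIntegral.integral_of_le hx,
    ← intervalIntegral.integral_add_adjacent_intervals (hint _ m) (hint m _), rising, falling,
    intervalIntegral.integral_comp_sub_right (fun t ↦ t),
    intervalIntegral.integral_comp_sub_left (fun t ↦ t)]
  simp only [integral_id]
  ring

theorem integral_tent (x : ℝ × ℝ) : ∫ t, tent x t = (max (x.2 - x.1) 0) ^ 2 / 4 := by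
  rcases le_total x.1 x.2 with hx | hx
  · rw [integral_tent_of_le hx, max_eq_left (by linarith)]
  · have hzero : tent x = 0 := funext fun t ↦
      max_eq_left (min_le_iff.2 (by by_contra! h; linarith [h.1, h.2]))
    rw [hzero, max_eq_right (by linarith)]
    simp

/-- The `L¹` distance between the tent functions of two points of `ℝ²_≤` is half
of `d_rk`: `∫ |tent_x − tent_y| = ¼(x₂−x₁)² + ¼(y₂−y₁)² − ½ max(min(x₂,y₂) − max(x₁,y₁), 0)²`. -/
theorem stmt7 (x y : ℝ × ℝ) (hx : x.1 ≤ x.2) (hy : y.1 ≤ y.2) :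
    (∫ t : ℝ, |tent x t - tent y t|) = drk x y / 2 ∧
    drk x y / 2 = (x.2 - x.1) ^ 2 / 4 + (y.2 - y.1) ^ 2 / 4
      - (max (min x.2 y.2 - max x.1 y.1) 0) ^ 2 / 2 := by
  refine ⟨?_, by unfold drk; ring⟩
  simp_rw [integral_abs_sub_eq (integrable_tent x) (integrable_tent y), min_tent_tent,
    integral_tent, max_eq_left (sub_nonneg.2 hx), max_eq_left (sub_nonneg.2 hy)]
  unfold drk
  ring
end
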